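/- The Euler–Mascheroni constant satisfies γ = -∫₀^∞ e^(-x) ln(x) dx. -/

import Mathlib

/-!
On `0 < re s` the function `Γ` agrees with Euler's integral, whose derivative is obtained by
differentiating under the integral sign: `Γ'(s) = ∫₀^∞ t^(s-1) log t e^(-t) dt`. At `s = 1` this is
`∫₀^∞ e^(-t) log t dt`, while `Γ'(1) = -γ` is known from the harmonic-number asymptotics of `Γ'`
at the positive integers.
-/

open Real MeasureTheory Set

theorem Complex.hasDerivAt_Gamma_of_re_pos {s : ℂ} (hs : 0 < s.re) :
    HasDerivAt Complex.Gamma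
      (∫ t : ℝ in Ioi 0, (t : ℂ) ^ (s - 1) * (Real.log t * Real.exp (-t))) s := by
  have hGamma : Complex.GammaIntegral =ᶠ[nhds s] Complex.Gamma := by
    filter_upwards [(isOpen_lt continuous_const Complex.continuous_re).mem_nhds hs] with z hz
    exact (Complex.Gamma_eq_integral hz).symm
  exact (Complex.hasDerivAt_GammaIntegral hs).congr_of_eventuallyEq hGamma.symm

theorem Real.hasDerivAt_Gamma_of_pos {s : ℝ} (hs : 0 < s) :
    HasDerivAt Real.Gamma (∫ t in Ioi (0 : ℝ), t ^ (s - 1) * Real.log t * Real.exp (-t)) s := by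
  have hC := (Complex.hasDerivAt_Gamma_of_re_pos (s := s) (by simpa using hs)).real_of_complex
  have hre : (∫ t : ℝ in Ioi 0, (t : ℂ) ^ ((s : ℂ) - 1) * (Real.log t * Real.exp (-t))).re
      = ∫ t in Ioi (0 : ℝ), t ^ (s - 1) * Real.log t * Real.exp (-t) := by
    rw [setIntegral_congr_fun
        (g := fun t : ℝ => ((t ^ (s - 1) * Real.log t * Real.exp (-t) : ℝ) : ℂ))
        measurableSet_Ioi fun t (ht : 0 < t) => by push_cast [Complex.ofReal_cpow ht.le]; ring,
      integral_complex_ofReal, Complex.ofReal_re]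
  simpa only [Complex.Gamma_ofReal, Complex.ofReal_re, hre] using hC

/-- The Euler–Mascheroni constant satisfies `γ = -∫₀^∞ e^(-x) ln x dx`. -/
theorem eulerMascheroni_eq_neg_integral :
    Real.eulerMascheroniConstant = -∫ x in Set.Ioi (0 : ℝ), Real.exp (-x) * Real.log x := by
  have hderiv := Real.hasDerivAt_Gamma_of_pos one_pos
  simp only [sub_self, Real.rpow_zero, one_mul, mul_comm (Real.log _)] at hderiv
  linarith [Real.hasDerivAt_Gamma_one.unique hderiv]
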